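/- Over {a<b<c}, let w = u·c·v where u, v ∈ {a,b}* and the projection of w onto {a,c} is a^m c a^n with m, n ≥ 1 (so w contains exactly one c). Suppose w is not M-equivalent to any word containing ac or ca as a factor. Then for every w' M-equivalent to w, the projection π_{a,c}(w') equals π_{a,c}(w). -/

import Mathlib

/-!
A word `w'` that is M-equivalent to `w = u c v` has exactly one `c`, so `w' = P c S` with `P, S`
over `{a, b}`, and the six invariants say that `|P|_b = |u|_b`, `|P|_ab = |u|_ab`, `|S|_b = |v|_b`,
`|P|_a + |S|_a = |u|_a + |v|_a` and `|P|_a |S|_b + |S|_ab = |u|_a |v|_b + |v|_ab`. If `P` has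
`k > 0` fewer `a`'s than `u`, then `P a^k c v` is M-equivalent to `w` and contains `ac`; if it has
`k > 0` more, then `u c a^k S` is M-equivalent to `w` and contains `ca`. So `|P|_a = |u|_a` and
`|S|_a = |v|_a`, which is all the projection onto `{a, c}` sees.
-/

open List

/-- Number of occurrences of `v` as a scattered subsequence of `w`. -/
def scount {α : Type*} [DecidableEq α] (w v : List α) : ℕ := w.sublists.count v

/-- The ternary ordered alphabet {a < b < c}. -/
inductive ABC | a | b | c
deriving DecidableEq

open ABC

/-- M-equivalence over the ordered alphabet {a < b < c}. -/
def MEq3 (w w' : List ABC) : Prop :=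
  scount w [a] = scount w' [a] ∧ scount w [b] = scount w' [b] ∧
  scount w [c] = scount w' [c] ∧ scount w [a, b] = scount w' [a, b] ∧
  scount w [b, c] = scount w' [b, c] ∧ scount w [a, b, c] = scount w' [a, b, c]

/-- Projection onto {a, c}: erase all b's. -/
def projAC (w : List ABC) : List ABC := w.filter (· ≠ b)

abbrev A (k : ℕ) : List ABC := List.replicate k a
abbrev B (k : ℕ) : List ABC := List.replicate k b
abbrev C (k : ℕ) : List ABC := List.replicate k c

section Subsequences

variable {α : Type*} [DecidableEq α]

lemma scount_eq_count_sublists' (w v : List α) : scount w v = w.sublists'.count v :=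
  (sublists_perm_sublists' w).count_eq v

@[simp]
lemma scount_nil_cons (y : α) (t : List α) : scount [] (y :: t) = 0 := rfl

lemma scount_cons_nil (x : α) (w : List α) : scount (x :: w) [] = scount w [] := by
  simp only [scount_eq_count_sublists', sublists'_cons, count_append, Nat.add_eq_left]
  exact count_eq_zero.mpr (by simp)

lemma scount_cons_cons (x y : α) (w t : List α) :
    scount (x :: w) (y :: t) = scount w (y :: t) + if y = x then scount w t else 0 := by
  simp only [scount_eq_count_sublists', sublists'_cons, count_append]
  congr 1
  split_ifs with h
  · rw [h, count_map_of_injective _ _ cons_injective]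
  · exact count_eq_zero.mpr (by simp [Ne.symm h])

@[simp]
lemma scount_nil_right (w : List α) : scount w [] = 1 := by
  induction w with
  | nil => rfl
  | cons x w ih => rw [scount_cons_nil, ih]

lemma scount_singleton (w : List α) (x : α) : scount w [x] = count x w := by
  induction w with
  | nil => rfl
  | cons y w ih =>
    rw [scount_cons_cons, ih, count_cons, scount_nil_right]
    rcases eq_or_ne x y with rfl | h
    · simp
    · simp [h, h.symm]

lemma scount_append_pair (u w : List α) (x y : α) :
    scount (u ++ w) [x, y] = scount u [x, y] + count x u * count y w + scount w [x, y] := by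
  induction u with
  | nil => simp
  | cons z u ih =>
    simp only [cons_append, scount_cons_cons, ih, scount_singleton, count_append, count_cons]
    rcases eq_or_ne x z with rfl | h
    · simp only [if_true, beq_self_eq_true]
      ring
    · simp [h, h.symm]

lemma scount_append_triple (u w : List α) (x y z : α) :
    scount (u ++ w) [x, y, z] = scount u [x, y, z] + scount u [x, y] * count z w
      + count x u * scount w [y, z] + scount w [x, y, z] := by
  induction u with
  | nil => simp
  | cons q u ih =>
    simp only [cons_append, scount_cons_cons, ih, scount_append_pair, scount_singleton,
      count_cons]
    rcases eq_or_ne x q with rfl | h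
    · simp only [if_true, beq_self_eq_true]
      ring
    · simp [h, h.symm]

lemma scount_eq_zero_of_notMem {w v : List α} {x : α} (hxv : x ∈ v) (hxw : x ∉ w) :
    scount w v = 0 :=
  count_eq_zero.mpr fun h => hxw ((mem_sublists.mp h).subset hxv)

lemma exists_eq_append_of_count_eq_one {x : α} {w : List α} (h : count x w = 1) :
    ∃ P S, w = P ++ [x] ++ S ∧ x ∉ P ∧ x ∉ S := by
  obtain ⟨P, S, rfl⟩ := append_of_mem (count_pos_iff.mp (h ▸ Nat.one_pos))
  simp only [count_append, count_cons_self] at h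
  exact ⟨P, S, by simp, count_eq_zero.mp (by omega), count_eq_zero.mp (by omega)⟩

end Subsequences

namespace ABC

lemma c_notMem_of_forall {u : List ABC} (hu : ∀ x ∈ u, x = a ∨ x = b) : c ∉ u :=
  fun h => by simpa using hu c h

section SingleC

variable {P S P' S' : List ABC}

lemma scount_ab_append_c (P S : List ABC) :
    scount (P ++ [c] ++ S) [a, b] = scount P [a, b] + count a P * count b S + scount S [a, b] := by
  rw [append_assoc, scount_append_pair, scount_append_pair]
  simp [scount_cons_cons]

lemma scount_bc_append_c (hP : c ∉ P) (hS : c ∉ S) :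
    scount (P ++ [c] ++ S) [b, c] = count b P := by
  rw [append_assoc, scount_append_pair, scount_append_pair, scount_eq_zero_of_notMem (x := c)
    (by simp) hP, scount_eq_zero_of_notMem (x := c) (by simp) hS]
  simp [scount_cons_cons, count_eq_zero_of_not_mem hS]

lemma scount_abc_append_c (hP : c ∉ P) (hS : c ∉ S) :
    scount (P ++ [c] ++ S) [a, b, c] = scount P [a, b] := by
  rw [append_assoc, scount_append_triple, scount_append_triple, scount_append_pair,
    scount_eq_zero_of_notMem (x := c) (by simp) hP, scount_eq_zero_of_notMem (x := c) (by simp) hS,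
    scount_eq_zero_of_notMem (x := c) (by simp) hS]
  simp [scount_cons_cons, count_eq_zero_of_not_mem hS]

lemma meq3_append_c_iff (hP : c ∉ P) (hS : c ∉ S) (hP' : c ∉ P') (hS' : c ∉ S') :
    MEq3 (P ++ [c] ++ S) (P' ++ [c] ++ S') ↔
      count a P + count a S = count a P' + count a S' ∧ count b P = count b P' ∧
        count b S = count b S' ∧ scount P [a, b] = scount P' [a, b] ∧
        count a P * count b S + scount S [a, b] = count a P' * count b S' + scount S' [a, b] := by
  simp only [MEq3, scount_singleton, scount_ab_append_c, scount_bc_append_c hP hS,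
    scount_bc_append_c hP' hS', scount_abc_append_c hP hS, scount_abc_append_c hP' hS',
    count_append, count_singleton, beq_self_eq_true, beq_iff_eq, reduceCtorEq, if_true, if_false,
    count_eq_zero_of_not_mem hP, count_eq_zero_of_not_mem hS, count_eq_zero_of_not_mem hP',
    count_eq_zero_of_not_mem hS', Nat.add_zero, true_and]
  constructor
  · rintro ⟨h1, h2, h3, h4, h5⟩
    exact ⟨by omega, h4, by omega, h5, by omega⟩
  · rintro ⟨h1, h2, h3, h4, h5⟩
    exact ⟨by omega, by omega, by omega, h2, h4⟩

lemma projAC_append_c (P S : List ABC) :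
    projAC (P ++ [c] ++ S) = projAC P ++ [c] ++ projAC S := by
  simp [projAC, filter_append]

lemma projAC_eq_A_of_c_notMem (hP : c ∉ P) : projAC P = A (count a P) := by
  induction P with
  | nil => rfl
  | cons x P ih => cases x <;> simp_all [projAC, replicate_succ]

variable {u v : List ABC} {k : ℕ}

lemma scount_A_ab (k : ℕ) : scount (A k) [a, b] = 0 :=
  scount_eq_zero_of_notMem (x := b) (by simp) (by simp)

lemma meq3_append_A_left (hu : c ∉ u) (hv : c ∉ v) (hP : c ∉ P) (hS : c ∉ S)
    (hw : MEq3 (u ++ [c] ++ v) (P ++ [c] ++ S)) (hk : count a P + k = count a u) :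
    MEq3 (u ++ [c] ++ v) (P ++ A k ++ [c] ++ v) := by
  obtain ⟨-, hb, -, hab, -⟩ := (meq3_append_c_iff hu hv hP hS).1 hw
  rw [meq3_append_c_iff hu hv (by simp [hP]) hv]
  simp only [count_append, scount_append_pair, count_replicate, scount_A_ab, BEq.rfl, reduceIte,
    beq_iff_eq, reduceCtorEq, add_zero, mul_zero, hk, hb, hab, and_self]

lemma meq3_A_append_right (hu : c ∉ u) (hv : c ∉ v) (hP : c ∉ P) (hS : c ∉ S)
    (hw : MEq3 (u ++ [c] ++ v) (P ++ [c] ++ S)) (hk : count a u + k = count a P) :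
    MEq3 (u ++ [c] ++ v) (u ++ [c] ++ (A k ++ S)) := by
  obtain ⟨ha, -, hb, -, hab⟩ := (meq3_append_c_iff hu hv hP hS).1 hw
  rw [meq3_append_c_iff hu hv hu (by simp [hS])]
  rw [← hk, ← hb, add_mul] at hab
  simp only [count_append, scount_append_pair, count_replicate, scount_A_ab, ← hb, BEq.rfl,
    reduceIte, beq_iff_eq, reduceCtorEq, zero_add, true_and]
  exact ⟨by omega, by omega⟩

end SingleC

end ABC

theorem stmt_10_general (u v : List ABC)
    (hu : ∀ x ∈ u, x = a ∨ x = b) (hv : ∀ x ∈ v, x = a ∨ x = b)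
    (hnd : ¬ ∃ z : List ABC, MEq3 (u ++ [c] ++ v) z ∧
      ([a, c] <:+: z ∨ [c, a] <:+: z)) :
    ∀ w' : List ABC, MEq3 (u ++ [c] ++ v) w' →
      projAC w' = projAC (u ++ [c] ++ v) := by
  intro w' hw'
  have hcu := c_notMem_of_forall hu
  have hcv := c_notMem_of_forall hv
  have hc : count c w' = 1 := by
    rw [← scount_singleton, ← hw'.2.2.1, scount_singleton]
    simp [count_eq_zero_of_not_mem hcu, count_eq_zero_of_not_mem hcv]
  obtain ⟨P, S, rfl, hcP, hcS⟩ := exists_eq_append_of_count_eq_one hc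
  have haP : count a P = count a u := by
    rcases lt_trichotomy (count a P) (count a u) with hlt | heq | hgt
    · obtain ⟨k, hk⟩ := Nat.exists_eq_add_of_lt hlt
      refine absurd ⟨_, meq3_append_A_left hcu hcv hcP hcS hw' (k := k + 1) (by omega),
        Or.inl ⟨P ++ A k, v, ?_⟩⟩ hnd
      simp [replicate_succ']
    · exact heq
    · obtain ⟨k, hk⟩ := Nat.exists_eq_add_of_lt hgt
      refine absurd ⟨_, meq3_A_append_right hcu hcv hcP hcS hw' (k := k + 1) (by omega),
        Or.inr ⟨u, A k ++ S, ?_⟩⟩ hnd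
      simp [replicate_succ]
  have haS : count a S = count a v := by
    have := ((meq3_append_c_iff hcu hcv hcP hcS).1 hw').1
    omega
  rw [projAC_append_c, projAC_append_c, projAC_eq_A_of_c_notMem hcP,
    projAC_eq_A_of_c_notMem hcS, projAC_eq_A_of_c_notMem hcu, projAC_eq_A_of_c_notMem hcv, haP, haS]

theorem stmt_10 (u v : List ABC)
    (hu : ∀ x ∈ u, x = a ∨ x = b) (hv : ∀ x ∈ v, x = a ∨ x = b)
    (m n : ℕ) (hm : 1 ≤ m) (hn : 1 ≤ n)
    (hproj : projAC (u ++ [c] ++ v) = A m ++ [c] ++ A n)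
    (hnd : ¬ ∃ z : List ABC, MEq3 (u ++ [c] ++ v) z ∧
      ([a, c] <:+: z ∨ [c, a] <:+: z)) :
    ∀ w' : List ABC, MEq3 (u ++ [c] ++ v) w' →
      projAC w' = projAC (u ++ [c] ++ v) :=
  stmt_10_general u v hu hv hnd
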